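/- arXiv:2109.12175 — 2 statements merged into one kernel-verified Lean document; each statement's English description precedes it below -/
import Mathlib

section
/- Let n ≥ 1 and let 𝐀 ∈ ℝ^{(n+m)×(n+m)} be symmetric positive definite, 𝐁 ∈ ℝ^{(n+m)×n}, 𝐂 ∈ ℝ^{n×n} symmetric, with 𝐐 := 𝐁ᵀ𝐀⁻¹𝐁 − 𝐂 ⪰ 0. Define 𝒞 := {[A B] : [I A B] [[𝐂, 𝐁ᵀ],[𝐁, 𝐀]] [I A B]ᵀ ⪯ 0}. Then the following are equivalent: (i) there exist K ∈ ℝ^{m×n} and symmetric P ≻ 0 such that (A+BK) P (A+BK)ᵀ − P ≺ 0 for all [A B] ∈ 𝒞; (ii) there exist Y ∈ ℝ^{m×n} and symmetric P ≻ 0 such that the block matrix [[−P−𝐂, 0, 𝐁ᵀ],[0, −P, [P Yᵀ]],[𝐁, [P;Y], −𝐀]] ≺ 0. Moreover, if (ii) holds with solution (P, Y), then K := Y P⁻¹ satisfies (i). -/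
open Matrix

variable {ι : Type*} [Fintype ι]

private lemma quad_continuous (M : Matrix ι ι ℝ) :
    Continuous fun z : ι → ℝ => z ⬝ᵥ M *ᵥ z := by
  unfold dotProduct mulVec
  simp only [dotProduct]
  exact continuous_finset_sum _ fun i _ => (continuous_apply i).mul
    (continuous_finset_sum _ fun j _ => continuous_const.mul (continuous_apply j))

private lemma quad_smul (M : Matrix ι ι ℝ) (c : ℝ) (z : ι → ℝ) :
    (c • z) ⬝ᵥ M *ᵥ (c • z) = c ^ 2 * (z ⬝ᵥ M *ᵥ z) := by
  simp only [mulVec_smul, dotProduct_smul, smul_dotProduct, smul_eq_mul]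
  ring

private lemma quad_expand (M : Matrix ι ι ℝ) (y z : ι → ℝ) (t : ℝ) :
    (y + t • z) ⬝ᵥ M *ᵥ (y + t • z) =
      (y ⬝ᵥ M *ᵥ y) + (y ⬝ᵥ M *ᵥ z + z ⬝ᵥ M *ᵥ y) * t + (z ⬝ᵥ M *ᵥ z) * t ^ 2 := by
  simp only [mulVec_add, mulVec_smul, dotProduct_add, add_dotProduct,
    dotProduct_smul, smul_dotProduct, smul_eq_mul]
  ring

private lemma quad_abs_le (M : Matrix ι ι ℝ) (z : ι → ℝ) :
    |z ⬝ᵥ M *ᵥ z| ≤ (∑ i, ∑ j, |M i j|) * (z ⬝ᵥ z) := by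
  have hzz : ∀ i j, |z i| * |z j| ≤ z ⬝ᵥ z := by
    intro i j
    have hi : z i * z i ≤ z ⬝ᵥ z := Finset.single_le_sum (f := fun k => z k * z k)
      (fun k _ => mul_self_nonneg _) (Finset.mem_univ i)
    have hj : z j * z j ≤ z ⬝ᵥ z := Finset.single_le_sum (f := fun k => z k * z k)
      (fun k _ => mul_self_nonneg _) (Finset.mem_univ j)
    nlinarith [sq_abs (z i), sq_abs (z j), abs_nonneg (z i), abs_nonneg (z j)]
  have key : ∀ i j, |z i * (M i j * z j)| ≤ |M i j| * (z ⬝ᵥ z) := by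
    intro i j
    rw [abs_mul, abs_mul, ← mul_assoc, mul_comm |z i| |M i j|, mul_assoc]
    exact mul_le_mul_of_nonneg_left (hzz i j) (abs_nonneg _)
  calc |z ⬝ᵥ M *ᵥ z| = |∑ i, ∑ j, z i * (M i j * z j)| := by
        unfold dotProduct mulVec
        simp only [dotProduct, Finset.mul_sum]
    _ ≤ ∑ i, |∑ j, z i * (M i j * z j)| := Finset.abs_sum_le_sum_abs _ _
    _ ≤ ∑ i, ∑ j, |z i * (M i j * z j)| :=
        Finset.sum_le_sum fun i _ => Finset.abs_sum_le_sum_abs _ _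
    _ ≤ ∑ i, ∑ j, |M i j| * (z ⬝ᵥ z) :=
        Finset.sum_le_sum fun i _ => Finset.sum_le_sum fun j _ => key i j
    _ = (∑ i, ∑ j, |M i j|) * (z ⬝ᵥ z) := by
        rw [Finset.sum_mul]; exact Finset.sum_congr rfl fun i _ => (Finset.sum_mul _ _ _).symm

private lemma dotProduct_self_pos {z : ι → ℝ} (hz : z ≠ 0) : 0 < z ⬝ᵥ z :=
  lt_of_le_of_ne (Finset.sum_nonneg fun i _ => mul_self_nonneg _)
    (fun h => hz (dotProduct_self_eq_zero.mp h.symm))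

private lemma dot_self_smul (c : ℝ) (z : ι → ℝ) : (c • z) ⬝ᵥ (c • z) = c ^ 2 * (z ⬝ᵥ z) := by
  simp only [dotProduct_smul, smul_dotProduct, smul_eq_mul]
  ring

private lemma dot_self_continuous : Continuous fun z : ι → ℝ => z ⬝ᵥ z := by
  unfold dotProduct
  exact continuous_finset_sum _ fun i _ => (continuous_apply i).mul (continuous_apply i)

private lemma exists_eps (S R : Matrix ι ι ℝ)
    (h : ∀ z : ι → ℝ, z ≠ 0 → z ⬝ᵥ S *ᵥ z ≤ 0 → 0 < z ⬝ᵥ R *ᵥ z) :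
    ∃ ε : ℝ, 0 < ε ∧ ∀ z : ι → ℝ, z ⬝ᵥ S *ᵥ z ≤ 0 → ε * (z ⬝ᵥ z) ≤ z ⬝ᵥ R *ᵥ z := by
  set K : Set (ι → ℝ) := {z | z ⬝ᵥ z = 1 ∧ z ⬝ᵥ S *ᵥ z ≤ 0} with hKdef
  have hscale : ∀ z : ι → ℝ, z ≠ 0 → z ⬝ᵥ S *ᵥ z ≤ 0 →
      ((Real.sqrt (z ⬝ᵥ z))⁻¹ • z) ∈ K ∧ ((Real.sqrt (z ⬝ᵥ z))⁻¹) ^ 2 = (z ⬝ᵥ z)⁻¹ := by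
    intro z hz hσ
    have hE : 0 < z ⬝ᵥ z := dotProduct_self_pos hz
    have hc2 : ((Real.sqrt (z ⬝ᵥ z))⁻¹) ^ 2 = (z ⬝ᵥ z)⁻¹ := by
      rw [inv_pow, Real.sq_sqrt hE.le]
    refine ⟨⟨?_, ?_⟩, hc2⟩
    · rw [dot_self_smul, hc2, inv_mul_cancel₀ hE.ne']
    · rw [quad_smul, hc2]
      exact mul_nonpos_of_nonneg_of_nonpos (inv_nonneg.mpr hE.le) hσ
  rcases K.eq_empty_or_nonempty with hKe | hKne
  · refine ⟨1, one_pos, fun z hσ => ?_⟩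
    by_cases hz : z = 0
    · subst hz; simp
    · exact absurd ((hscale z hz hσ).1) (by rw [hKe]; exact Set.notMem_empty _)
  · have hKc : IsCompact K := by
      have hclosed : IsClosed K := by
        refine IsClosed.inter (isClosed_eq dot_self_continuous continuous_const) ?_
        exact isClosed_le (quad_continuous S) continuous_const
      have hbdd : Bornology.IsBounded K := by
        refine (Metric.isBounded_iff_subset_closedBall 0).mpr ⟨1, fun z hz => ?_⟩
        rcases hz with ⟨hz1, -⟩
        rw [Metric.mem_closedBall, dist_zero_right]
        refine (pi_norm_le_iff_of_nonneg zero_le_one).mpr fun i => ?_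
        rw [Real.norm_eq_abs]
        have hle : z i * z i ≤ z ⬝ᵥ z := Finset.single_le_sum (f := fun k => z k * z k)
          (fun k _ => mul_self_nonneg _) (Finset.mem_univ i)
        exact abs_le_one_iff_mul_self_le_one.mpr (by linarith [hz1, hle])
      exact Metric.isCompact_of_isClosed_isBounded hclosed hbdd
    obtain ⟨z₀, hz₀K, hz₀min⟩ := hKc.exists_isMinOn hKne (quad_continuous R).continuousOn
    have hz₀ne : z₀ ≠ 0 := by
      intro h0
      have h1 := hz₀K.1
      rw [h0] at h1
      simp at h1
    refine ⟨z₀ ⬝ᵥ R *ᵥ z₀, h z₀ hz₀ne hz₀K.2, fun z hσ => ?_⟩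
    by_cases hz : z = 0
    · subst hz; simp
    · have hE : 0 < z ⬝ᵥ z := dotProduct_self_pos hz
      obtain ⟨hmem, hc2⟩ := hscale z hz hσ
      have hq : z₀ ⬝ᵥ R *ᵥ z₀ ≤ (z ⬝ᵥ z)⁻¹ * (z ⬝ᵥ R *ᵥ z) := by
        have h5 : z₀ ⬝ᵥ R *ᵥ z₀ ≤
            ((Real.sqrt (z ⬝ᵥ z))⁻¹ • z) ⬝ᵥ R *ᵥ ((Real.sqrt (z ⬝ᵥ z))⁻¹ • z) := hz₀min hmem
        rwa [quad_smul, hc2] at h5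
      calc (z₀ ⬝ᵥ R *ᵥ z₀) * (z ⬝ᵥ z) ≤ ((z ⬝ᵥ z)⁻¹ * (z ⬝ᵥ R *ᵥ z)) * (z ⬝ᵥ z) :=
            mul_le_mul_of_nonneg_right hq hE.le
        _ = z ⬝ᵥ R *ᵥ z := by field_simp

private lemma pairwise_aux {s1 a s2 r1 b r2 : ℝ} (hs1 : 0 < s1) (hs2 : s2 < 0)
    (h : ∀ t : ℝ, s1 + a * t + s2 * t ^ 2 = 0 → 0 ≤ r1 + b * t + r2 * t ^ 2) :
    r1 * s2 ≤ r2 * s1 := by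
  set d : ℝ := Real.sqrt (a ^ 2 - 4 * s2 * s1) with hd
  have hdisc : 0 < a ^ 2 - 4 * s2 * s1 := by nlinarith [sq_nonneg a]
  have hd2 : d ^ 2 = a ^ 2 - 4 * s2 * s1 := Real.sq_sqrt hdisc.le
  have hdpos : 0 < d := Real.sqrt_pos.mpr hdisc
  set t1 : ℝ := (-a - d) / (2 * s2) with ht1def
  set t2 : ℝ := (-a + d) / (2 * s2) with ht2def
  have hs2' : (2 : ℝ) * s2 < 0 := by linarith
  have ht1 : 0 < t1 := by
    apply div_pos_of_neg_of_neg _ hs2'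
    nlinarith [hd2, hdpos]
  have ht2 : t2 < 0 := by
    apply div_neg_of_pos_of_neg _ hs2'
    nlinarith [hd2, hdpos]
  have hs2ne : s2 ≠ 0 := hs2.ne
  have e1 : t1 * (2 * s2) = -a - d := by
    rw [ht1def, div_mul_cancel₀]
    exact mul_ne_zero two_ne_zero hs2ne
  have e2 : t2 * (2 * s2) = -a + d := by
    rw [ht2def, div_mul_cancel₀]
    exact mul_ne_zero two_ne_zero hs2ne
  have h4ne : (4 : ℝ) * s2 ≠ 0 := mul_ne_zero four_ne_zero hs2ne
  have hroot1 : s1 + a * t1 + s2 * t1 ^ 2 = 0 := by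
    have h0 : 4 * s2 * (s1 + a * t1 + s2 * t1 ^ 2) = 0 := by
      linear_combination hd2 + (2 * s2 * t1 + a - d) * e1
    rcases mul_eq_zero.mp h0 with h' | h'
    · exact absurd h' h4ne
    · exact h'
  have hroot2 : s1 + a * t2 + s2 * t2 ^ 2 = 0 := by
    have h0 : 4 * s2 * (s1 + a * t2 + s2 * t2 ^ 2) = 0 := by
      linear_combination hd2 + (2 * s2 * t2 + a + d) * e2
    rcases mul_eq_zero.mp h0 with h' | h'
    · exact absurd h' h4ne
    · exact h'
  have hq1 := h t1 hroot1
  have hq2 := h t2 hroot2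
  have hvieta : s2 * (t1 * t2) = s1 := by
    have h0 : 4 * s2 * (s2 * (t1 * t2) - s1) = 0 := by
      linear_combination (2 * s2 * t2) * e1 + (-(a + d)) * e2 + (-1 : ℝ) * hd2
    rcases mul_eq_zero.mp h0 with h' | h'
    · exact absurd h' h4ne
    · linarith [sub_eq_zero.mp h']
  have key : 0 ≤ (t1 - t2) * (r1 - r2 * (t1 * t2)) := by
    nlinarith [mul_nonneg (neg_nonneg.mpr ht2.le) hq1, mul_nonneg ht1.le hq2]
  have h12 : 0 < t1 - t2 := by linarith
  have key2 : 0 ≤ r1 - r2 * (t1 * t2) := by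
    by_contra hcon
    push_neg at hcon
    nlinarith [key, h12]
  have h5 : r2 * (s2 * (t1 * t2)) = r2 * s1 := by rw [hvieta]
  nlinarith [mul_nonneg (neg_nonneg.mpr hs2.le) key2, h5]

private lemma slem [DecidableEq ι] (S R : Matrix ι ι ℝ)
    (hslater : ∃ zb : ι → ℝ, zb ⬝ᵥ S *ᵥ zb < 0)
    (h : ∀ z : ι → ℝ, z ≠ 0 → z ⬝ᵥ S *ᵥ z ≤ 0 → 0 < z ⬝ᵥ R *ᵥ z) :
    ∃ lam : ℝ, 0 < lam ∧ ∀ z : ι → ℝ, z ≠ 0 →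
      0 < lam * (z ⬝ᵥ S *ᵥ z) + z ⬝ᵥ R *ᵥ z := by
  obtain ⟨ε, hε, hee⟩ := exists_eps S R h
  set R' : Matrix ι ι ℝ := R - ε • 1 with hR'def
  have hquadR' : ∀ z : ι → ℝ, z ⬝ᵥ R' *ᵥ z = z ⬝ᵥ R *ᵥ z - ε * (z ⬝ᵥ z) := by
    intro z
    rw [hR'def, sub_mulVec, dotProduct_sub, smul_mulVec, one_mulVec,
      dotProduct_smul, smul_eq_mul]
  have hyp2 : ∀ z : ι → ℝ, z ⬝ᵥ S *ᵥ z ≤ 0 → 0 ≤ z ⬝ᵥ R' *ᵥ z := by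
    intro z hz
    rw [hquadR']
    linarith [hee z hz]
  have pairwise : ∀ z1 z2 : ι → ℝ, 0 < z1 ⬝ᵥ S *ᵥ z1 → z2 ⬝ᵥ S *ᵥ z2 < 0 →
      (z1 ⬝ᵥ R' *ᵥ z1) * (z2 ⬝ᵥ S *ᵥ z2) ≤ (z2 ⬝ᵥ R' *ᵥ z2) * (z1 ⬝ᵥ S *ᵥ z1) := by
    intro z1 z2 h1 h2
    refine pairwise_aux (a := z1 ⬝ᵥ S *ᵥ z2 + z2 ⬝ᵥ S *ᵥ z1)
      (b := z1 ⬝ᵥ R' *ᵥ z2 + z2 ⬝ᵥ R' *ᵥ z1) h1 h2 (fun t ht => ?_)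
    have hs : (z1 + t • z2) ⬝ᵥ S *ᵥ (z1 + t • z2) = 0 := by
      rw [quad_expand]; exact ht
    have := hyp2 _ hs.le
    rwa [quad_expand] at this
  obtain ⟨zb, hzb⟩ := hslater
  set Lset : Set ℝ := {l | ∃ z : ι → ℝ, 0 < z ⬝ᵥ S *ᵥ z ∧ l = -(z ⬝ᵥ R' *ᵥ z) / (z ⬝ᵥ S *ᵥ z)}
    with hLdef
  have hub : ∀ z2 : ι → ℝ, z2 ⬝ᵥ S *ᵥ z2 < 0 →
      ∀ l ∈ Lset, l ≤ (z2 ⬝ᵥ R' *ᵥ z2) / (-(z2 ⬝ᵥ S *ᵥ z2)) := by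
    rintro z2 h2 l ⟨z, hz, rfl⟩
    rw [div_le_div_iff₀ hz (by linarith)]
    nlinarith [pairwise z z2 hz h2]
  have hbdd : BddAbove Lset := ⟨_, hub zb hzb⟩
  set tau : ℝ := max 0 (sSup Lset) with htaudef
  have htau0 : 0 ≤ tau := le_max_left _ _
  have claim : ∀ z : ι → ℝ, 0 ≤ z ⬝ᵥ R' *ᵥ z + tau * (z ⬝ᵥ S *ᵥ z) := by
    intro z
    rcases lt_trichotomy (z ⬝ᵥ S *ᵥ z) 0 with hneg | h0 | hpos
    · have hu0 : 0 ≤ (z ⬝ᵥ R' *ᵥ z) / (-(z ⬝ᵥ S *ᵥ z)) :=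
        div_nonneg (hyp2 z hneg.le) (by linarith)
      have hsup : sSup Lset ≤ (z ⬝ᵥ R' *ᵥ z) / (-(z ⬝ᵥ S *ᵥ z)) := by
        rcases Lset.eq_empty_or_nonempty with hLe | hLne
        · rw [hLe, Real.sSup_empty]; exact hu0
        · exact csSup_le hLne (hub z hneg)
      have htu : tau ≤ (z ⬝ᵥ R' *ᵥ z) / (-(z ⬝ᵥ S *ᵥ z)) := max_le hu0 hsup
      have := (le_div_iff₀ (by linarith : (0:ℝ) < -(z ⬝ᵥ S *ᵥ z))).mp htu
      nlinarith [this]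
    · rw [h0, mul_zero, add_zero]; exact hyp2 z h0.le
    · have hmem : -(z ⬝ᵥ R' *ᵥ z) / (z ⬝ᵥ S *ᵥ z) ∈ Lset := ⟨z, hpos, rfl⟩
      have hl : -(z ⬝ᵥ R' *ᵥ z) / (z ⬝ᵥ S *ᵥ z) ≤ tau :=
        le_trans (le_csSup hbdd hmem) (le_max_right _ _)
      have := (div_le_iff₀ hpos).mp hl
      nlinarith [this]
  set Cs : ℝ := ∑ i, ∑ j, |S i j| with hCs
  have hCs0 : 0 ≤ Cs :=
    Finset.sum_nonneg fun i _ => Finset.sum_nonneg fun j _ => abs_nonneg _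
  set δ : ℝ := ε / (2 * (Cs + 1)) with hδdef
  have hδ : 0 < δ := div_pos hε (by linarith)
  have hδCs : δ * Cs ≤ ε / 2 := by
    rw [hδdef, div_mul_eq_mul_div, div_le_div_iff₀ (by linarith) (by norm_num)]
    nlinarith [hε, hCs0]
  refine ⟨tau + δ, by linarith, fun z hz => ?_⟩
  have hE := dotProduct_self_pos hz
  have h1 := claim z
  rw [hquadR'] at h1
  have h2 := quad_abs_le S z
  have h3 : -(Cs * (z ⬝ᵥ z)) ≤ z ⬝ᵥ S *ᵥ z := neg_le_of_abs_le h2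
  nlinarith [mul_le_mul_of_nonneg_right hδCs hE.le, mul_le_mul_of_nonneg_left h3 hδ.le]

private lemma dot_mv_transpose {ι κ : Type*} [Fintype ι] [Fintype κ]
    (M : Matrix ι κ ℝ) (x : ι → ℝ) (y : κ → ℝ) :
    x ⬝ᵥ M *ᵥ y = y ⬝ᵥ Mᵀ *ᵥ x := by
  rw [dotProduct_mulVec, ← mulVec_transpose, dotProduct_comm]

private lemma quad_fromBlocks {ι κ : Type*} [Fintype ι] [Fintype κ]
    (M11 : Matrix ι ι ℝ) (M12 : Matrix ι κ ℝ) (M21 : Matrix κ ι ℝ) (M22 : Matrix κ κ ℝ)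
    (x : ι → ℝ) (y : κ → ℝ) :
    Sum.elim x y ⬝ᵥ fromBlocks M11 M12 M21 M22 *ᵥ Sum.elim x y =
      x ⬝ᵥ M11 *ᵥ x + x ⬝ᵥ M12 *ᵥ y + y ⬝ᵥ M21 *ᵥ x + y ⬝ᵥ M22 *ᵥ y := by
  rw [fromBlocks_mulVec, sumElim_dotProduct_sumElim, dotProduct_add, dotProduct_add]
  simp only [Sum.elim_comp_inl, Sum.elim_comp_inr]
  ring

private lemma quad_sandwich {ι κ : Type*} [Fintype ι] [Fintype κ]
    (W : Matrix ι κ ℝ) (P : Matrix κ κ ℝ) (x : ι → ℝ) :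
    x ⬝ᵥ (W * P * Wᵀ) *ᵥ x = (Wᵀ *ᵥ x) ⬝ᵥ P *ᵥ (Wᵀ *ᵥ x) := by
  rw [← mulVec_mulVec, ← mulVec_mulVec, dot_mv_transpose, dotProduct_comm]

section Main

variable {n m : ℕ}
variable (AA : Matrix (Fin n ⊕ Fin m) (Fin n ⊕ Fin m) ℝ)
variable (BB : Matrix (Fin n ⊕ Fin m) (Fin n) ℝ)
variable (CC : Matrix (Fin n) (Fin n) ℝ)

private def lmiM (P : Matrix (Fin n) (Fin n) ℝ) (Y : Matrix (Fin m) (Fin n) ℝ) :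
    Matrix (Fin n ⊕ (Fin n ⊕ (Fin n ⊕ Fin m))) (Fin n ⊕ (Fin n ⊕ (Fin n ⊕ Fin m))) ℝ :=
  -(fromBlocks (-P - CC) (fromCols 0 BBᵀ) (fromRows 0 BB)
      (fromBlocks (-P) (fromRows P Y)ᵀ (fromRows P Y) (-AA)))

private def memM (A : Matrix (Fin n) (Fin n) ℝ) (B : Matrix (Fin n) (Fin m) ℝ) :
    Matrix (Fin n) (Fin n) ℝ :=
  -(fromCols (1 : Matrix (Fin n) (Fin n) ℝ) (fromCols A B) *
      fromBlocks CC BBᵀ BB AA *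
      (fromCols (1 : Matrix (Fin n) (Fin n) ℝ) (fromCols A B))ᵀ)

private lemma quad_lmiM (P : Matrix (Fin n) (Fin n) ℝ) (Y : Matrix (Fin m) (Fin n) ℝ)
    (u v : Fin n → ℝ) (w : Fin n ⊕ Fin m → ℝ) :
    Sum.elim u (Sum.elim v w) ⬝ᵥ (lmiM AA BB CC P Y) *ᵥ Sum.elim u (Sum.elim v w) =
      (u ⬝ᵥ P *ᵥ u + u ⬝ᵥ CC *ᵥ u) + v ⬝ᵥ P *ᵥ v + w ⬝ᵥ AA *ᵥ w
        - 2 * (u ⬝ᵥ BBᵀ *ᵥ w) - 2 * (v ⬝ᵥ (fromRows P Y)ᵀ *ᵥ w) := by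
  rw [lmiM, neg_mulVec, dotProduct_neg, quad_fromBlocks, quad_fromBlocks]
  rw [fromCols_mulVec_sumElim, fromRows_mulVec, sumElim_dotProduct_sumElim]
  rw [dot_mv_transpose BB w u, dot_mv_transpose (fromRows P Y) w v]
  simp only [zero_mulVec, zero_add, dotProduct_zero, sub_mulVec, neg_mulVec,
    dotProduct_sub, dotProduct_neg, dotProduct_add]
  ring


private lemma isHermitian_iff_transpose {ι : Type*} (M : Matrix ι ι ℝ) :
    M.IsHermitian ↔ Mᵀ = M := by
  unfold Matrix.IsHermitian
  rw [conjTranspose_eq_transpose_of_trivial]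

private lemma star_id {ι : Type*} (x : ι → ℝ) : star x = x := by
  funext i; simp

private lemma quad_memM (A : Matrix (Fin n) (Fin n) ℝ) (B : Matrix (Fin n) (Fin m) ℝ)
    (s : Fin n → ℝ) :
    s ⬝ᵥ (memM AA BB CC A B) *ᵥ s =
      -(s ⬝ᵥ CC *ᵥ s + 2 * (s ⬝ᵥ BBᵀ *ᵥ ((fromCols A B)ᵀ *ᵥ s))
        + ((fromCols A B)ᵀ *ᵥ s) ⬝ᵥ AA *ᵥ ((fromCols A B)ᵀ *ᵥ s)) := by
  rw [memM, neg_mulVec, dotProduct_neg, quad_sandwich]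
  have hU : (fromCols (1 : Matrix (Fin n) (Fin n) ℝ) (fromCols A B))ᵀ *ᵥ s
      = Sum.elim s ((fromCols A B)ᵀ *ᵥ s) := by
    rw [transpose_fromCols, fromRows_mulVec, transpose_one, one_mulVec]
  rw [hU, quad_fromBlocks, dot_mv_transpose BB ((fromCols A B)ᵀ *ᵥ s) s]
  ring

private lemma lmiM_isHermitian (hA : AAᵀ = AA) (hC : CCᵀ = CC)
    {P : Matrix (Fin n) (Fin n) ℝ} (hP : Pᵀ = P) (Y : Matrix (Fin m) (Fin n) ℝ) :
    (lmiM AA BB CC P Y).IsHermitian := by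
  rw [isHermitian_iff_transpose, lmiM]
  simp only [transpose_neg, fromBlocks_transpose, transpose_fromCols, transpose_fromRows,
    transpose_sub, transpose_zero, transpose_transpose, transpose_one, hA, hC, hP]

private lemma memM_isHermitian (hA : AAᵀ = AA) (hC : CCᵀ = CC)
    (A : Matrix (Fin n) (Fin n) ℝ) (B : Matrix (Fin n) (Fin m) ℝ) :
    (memM AA BB CC A B).IsHermitian := by
  rw [isHermitian_iff_transpose, memM]
  simp only [transpose_neg, transpose_mul, transpose_transpose, fromBlocks_transpose,
    hA, hC, Matrix.mul_assoc]

private lemma suff (hA : AA.PosDef) (hC : CC.IsSymm)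
    (Y : Matrix (Fin m) (Fin n) ℝ) (P : Matrix (Fin n) (Fin n) ℝ)
    (hP : P.PosDef) (hlmi : (lmiM AA BB CC P Y).PosDef)
    (A : Matrix (Fin n) (Fin n) ℝ) (B : Matrix (Fin n) (Fin m) ℝ)
    (hmem : (memM AA BB CC A B).PosSemidef) :
    (P - (A + B * (Y * P⁻¹)) * P * (A + B * (Y * P⁻¹))ᵀ).PosDef := by
  have hPt : Pᵀ = P := (isHermitian_iff_transpose P).mp hP.1
  have hdet : IsUnit P.det := isUnit_iff_ne_zero.mpr hP.det_pos.ne'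
  set K : Matrix (Fin m) (Fin n) ℝ := Y * P⁻¹ with hKdef
  set Z : Matrix (Fin n ⊕ Fin m) (Fin n) ℝ := fromRows 1 K with hZdef
  set X : Matrix (Fin n) (Fin n ⊕ Fin m) ℝ := fromCols A B with hXdef
  have hYP : fromRows P Y = Z * P := by
    rw [hZdef, fromRows_mul, Matrix.one_mul, hKdef, Matrix.mul_assoc,
      Matrix.nonsing_inv_mul P hdet, Matrix.mul_one]
  have hABK : A + B * K = X * Z := by
    rw [hXdef, hZdef, fromCols_mul_fromRows, Matrix.mul_one]
  rw [hABK]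
  rw [posDef_iff_dotProduct_mulVec]
  constructor
  · rw [isHermitian_iff_transpose]
    simp only [transpose_sub, transpose_mul, transpose_transpose, hPt, Matrix.mul_assoc]
  · intro x hx
    rw [star_id]
    set w : Fin n ⊕ Fin m → ℝ := -(Xᵀ *ᵥ x) with hwdef
    set v : Fin n → ℝ := Zᵀ *ᵥ w with hvdef
    have hz : Sum.elim x (Sum.elim v w) ≠ 0 := by
      intro h0
      exact hx (funext fun i => congrFun h0 (Sum.inl i))
    have hq := hlmi.dotProduct_mulVec_pos hz
    rw [star_id, quad_lmiM] at hq
    have hF1 : v ⬝ᵥ (fromRows P Y)ᵀ *ᵥ w = v ⬝ᵥ P *ᵥ v := by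
      rw [hYP, transpose_mul, ← mulVec_mulVec, hPt, ← hvdef]
    have haw : w ⬝ᵥ AA *ᵥ w = (Xᵀ *ᵥ x) ⬝ᵥ AA *ᵥ (Xᵀ *ᵥ x) := by
      rw [hwdef, mulVec_neg, dotProduct_neg, neg_dotProduct, neg_neg]
    have hbw : x ⬝ᵥ BBᵀ *ᵥ w = -(x ⬝ᵥ BBᵀ *ᵥ (Xᵀ *ᵥ x)) := by
      rw [hwdef, mulVec_neg, dotProduct_neg]
    rw [hF1, haw, hbw] at hq
    have hmq := hmem.dotProduct_mulVec_nonneg x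
    rw [star_id, quad_memM] at hmq
    rw [← hXdef] at hmq
    have hmq' : x ⬝ᵥ CC *ᵥ x + 2 * (x ⬝ᵥ BBᵀ *ᵥ (Xᵀ *ᵥ x))
        + (Xᵀ *ᵥ x) ⬝ᵥ AA *ᵥ (Xᵀ *ᵥ x) ≤ 0 := by linarith [hmq]
    rw [sub_mulVec, dotProduct_sub, quad_sandwich]
    have hgv : (X * Z)ᵀ *ᵥ x = -v := by
      rw [transpose_mul, ← mulVec_mulVec, hvdef, hwdef, mulVec_neg, neg_neg]
    rw [hgv, mulVec_neg, dotProduct_neg, neg_dotProduct, neg_neg]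
    linarith [hq, hmq']


private lemma vecMulVec_mulVec' {ι κ : Type*} [Fintype κ] (x : ι → ℝ) (y : κ → ℝ) (s : κ → ℝ) :
    vecMulVec x y *ᵥ s = (y ⬝ᵥ s) • x := by
  funext i
  simp only [vecMulVec, mulVec, of_apply, dotProduct, Pi.smul_apply, smul_eq_mul]
  rw [Finset.sum_mul]
  refine Finset.sum_congr rfl fun j _ => by ring

private lemma vecMulVec_transpose' {ι κ : Type*} (x : ι → ℝ) (y : κ → ℝ) :
    (vecMulVec x y)ᵀ = vecMulVec y x := by
  ext i j
  simp only [vecMulVec, transpose_apply, of_apply]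
  ring

private lemma fromRows_smul' {ι κ μ : Type*} (c : ℝ) (X : Matrix ι μ ℝ) (Y : Matrix κ μ ℝ) :
    c • fromRows X Y = fromRows (c • X) (c • Y) := by
  ext i j
  rcases i with i | i <;> rfl

private lemma elim_zero_zero {a b : Type*} : (Sum.elim (0 : a → ℝ) (0 : b → ℝ)) = 0 := by
  funext i; cases i <;> rfl

-- quadratic forms used in the necessity direction
private def Smat (P : Matrix (Fin n) (Fin n) ℝ) (Z : Matrix (Fin n ⊕ Fin m) (Fin n) ℝ) :
    Matrix (Fin n ⊕ (Fin n ⊕ (Fin n ⊕ Fin m))) (Fin n ⊕ (Fin n ⊕ (Fin n ⊕ Fin m))) ℝ :=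
  fromBlocks P 0 0 (fromBlocks P (-(P * Zᵀ)) (-(Z * P)) 0)

private def Rmat : Matrix (Fin n ⊕ (Fin n ⊕ (Fin n ⊕ Fin m)))
    (Fin n ⊕ (Fin n ⊕ (Fin n ⊕ Fin m))) ℝ :=
  fromBlocks CC (fromCols 0 (-BBᵀ)) (fromRows 0 (-BB)) (fromBlocks 0 0 0 AA)

private lemma quad_Smat {P : Matrix (Fin n) (Fin n) ℝ} (hPt : Pᵀ = P)
    (Z : Matrix (Fin n ⊕ Fin m) (Fin n) ℝ)
    (u v : Fin n → ℝ) (w : Fin n ⊕ Fin m → ℝ) :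
    Sum.elim u (Sum.elim v w) ⬝ᵥ Smat P Z *ᵥ Sum.elim u (Sum.elim v w) =
      u ⬝ᵥ P *ᵥ u + v ⬝ᵥ P *ᵥ v - 2 * (v ⬝ᵥ P *ᵥ (Zᵀ *ᵥ w)) := by
  rw [Smat, quad_fromBlocks, quad_fromBlocks]
  rw [dot_mv_transpose (-(Z * P)) w v]
  simp only [zero_mulVec, dotProduct_zero, transpose_neg, transpose_mul, hPt,
    neg_mulVec, dotProduct_neg, ← mulVec_mulVec]
  ring

private lemma quad_Rmat (u v : Fin n → ℝ) (w : Fin n ⊕ Fin m → ℝ) :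
    Sum.elim u (Sum.elim v w) ⬝ᵥ Rmat AA BB CC *ᵥ Sum.elim u (Sum.elim v w) =
      u ⬝ᵥ CC *ᵥ u + w ⬝ᵥ AA *ᵥ w - 2 * (u ⬝ᵥ BBᵀ *ᵥ w) := by
  rw [Rmat, quad_fromBlocks, quad_fromBlocks]
  rw [fromCols_mulVec_sumElim, fromRows_mulVec, sumElim_dotProduct_sumElim]
  rw [dot_mv_transpose (-BB) w u]
  simp only [zero_mulVec, dotProduct_zero, zero_add, transpose_neg,
    neg_mulVec, dotProduct_neg]
  ring


private lemma key_lemma (hA : AA.PosDef) (hC : CC.IsSymm)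
    (hQ : (BBᵀ * AA⁻¹ * BB - CC).PosSemidef)
    (K : Matrix (Fin m) (Fin n) ℝ) (P : Matrix (Fin n) (Fin n) ℝ) (hP : P.PosDef)
    (hK : ∀ A B, (memM AA BB CC A B).PosSemidef →
      (P - (A + B * K) * P * (A + B * K)ᵀ).PosDef) :
    ∀ z : (Fin n ⊕ (Fin n ⊕ (Fin n ⊕ Fin m))) → ℝ, z ≠ 0 →
      z ⬝ᵥ Smat P (fromRows 1 K) *ᵥ z ≤ 0 → 0 < z ⬝ᵥ Rmat AA BB CC *ᵥ z := by
  have hPt : Pᵀ = P := (isHermitian_iff_transpose P).mp hP.1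
  have hAt : AAᵀ = AA := (isHermitian_iff_transpose AA).mp hA.1
  have hCt : CCᵀ = CC := hC
  have hAdet : IsUnit AA.det := isUnit_iff_ne_zero.mpr hA.det_pos.ne'
  have hAinvt : (AA⁻¹)ᵀ = AA⁻¹ := by rw [transpose_nonsing_inv, hAt]
  set Q : Matrix (Fin n) (Fin n) ℝ := BBᵀ * AA⁻¹ * BB - CC with hQdef
  have hQt : Qᵀ = Q := (isHermitian_iff_transpose Q).mp hQ.1
  set Z : Matrix (Fin n ⊕ Fin m) (Fin n) ℝ := fromRows 1 K with hZdef
  have hsymAA : ∀ (a b : (Fin n ⊕ Fin m) → ℝ), a ⬝ᵥ AA *ᵥ b = b ⬝ᵥ AA *ᵥ a := by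
    intro a b; rw [dot_mv_transpose, hAt]
  have hsymQ : ∀ (a b : Fin n → ℝ), a ⬝ᵥ Q *ᵥ b = b ⬝ᵥ Q *ᵥ a := by
    intro a b; rw [dot_mv_transpose, hQt]
  have hQuad : ∀ s : Fin n → ℝ,
      s ⬝ᵥ Q *ᵥ s = (BB *ᵥ s) ⬝ᵥ (AA⁻¹ *ᵥ (BB *ᵥ s)) - s ⬝ᵥ CC *ᵥ s := by
    intro s
    rw [hQdef, sub_mulVec, dotProduct_sub]
    congr 1
    rw [← mulVec_mulVec, ← mulVec_mulVec, dot_mv_transpose BBᵀ s, transpose_transpose,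
      dotProduct_comm]
  intro z hz hσ
  have hzdec : z = Sum.elim (z ∘ Sum.inl)
      (Sum.elim (fun i => z (Sum.inr (Sum.inl i))) (fun j => z (Sum.inr (Sum.inr j)))) := by
    funext i
    rcases i with i | i
    · rfl
    · rcases i with i | i <;> rfl
  set u : Fin n → ℝ := z ∘ Sum.inl with hudef
  set v : Fin n → ℝ := fun i => z (Sum.inr (Sum.inl i)) with hvdef
  set w : Fin n ⊕ Fin m → ℝ := fun j => z (Sum.inr (Sum.inr j)) with hwdef
  rw [hzdec, quad_Smat hPt] at hσ
  rw [hzdec, quad_Rmat]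
  by_contra hcon
  push_neg at hcon
  -- translated variables
  set bu : (Fin n ⊕ Fin m) → ℝ := BB *ᵥ u with hbu
  set qu : (Fin n ⊕ Fin m) → ℝ := AA⁻¹ *ᵥ bu with hqu
  set wt : (Fin n ⊕ Fin m) → ℝ := w - qu with hwtdef
  have hw : w = wt + qu := by rw [hwtdef, sub_add_cancel]
  have hAq : AA *ᵥ qu = bu := by
    rw [hqu, mulVec_mulVec, mul_nonsing_inv _ hAdet, one_mulVec]
  have e1 : w ⬝ᵥ AA *ᵥ w = wt ⬝ᵥ AA *ᵥ wt + 2 * (wt ⬝ᵥ bu) + bu ⬝ᵥ qu := by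
    rw [hw, mulVec_add, hAq, dotProduct_add, add_dotProduct, add_dotProduct,
      hsymAA qu wt, hAq, dotProduct_comm qu bu]
    ring
  have e2 : u ⬝ᵥ BBᵀ *ᵥ w = wt ⬝ᵥ bu + qu ⬝ᵥ bu := by
    rw [dot_mv_transpose BBᵀ u w, transpose_transpose, ← hbu, hw, add_dotProduct]
  have e3 : u ⬝ᵥ Q *ᵥ u = bu ⬝ᵥ qu - u ⬝ᵥ CC *ᵥ u := by
    rw [hQuad u, ← hbu, ← hqu]
  have hrho : u ⬝ᵥ CC *ᵥ u + w ⬝ᵥ AA *ᵥ w - 2 * (u ⬝ᵥ BBᵀ *ᵥ w)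
      = wt ⬝ᵥ AA *ᵥ wt - u ⬝ᵥ Q *ᵥ u := by
    rw [e1, e2, e3, dotProduct_comm qu bu]
    ring
  by_cases hu : u = 0
  · -- then w = 0, then v = 0, then z = 0 : contradiction
    rw [hu] at hcon
    simp only [zero_dotProduct, mul_zero, zero_add, sub_zero] at hcon
    have hw0 : w = 0 := by
      by_contra hwne
      have := hA.dotProduct_mulVec_pos hwne
      rw [star_id] at this
      linarith
    rw [hu, hw0] at hσ
    simp only [zero_dotProduct, mulVec_zero, dotProduct_zero, mul_zero, zero_add,
      sub_zero] at hσ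
    have hv0 : v = 0 := by
      by_contra hvne
      have := hP.dotProduct_mulVec_pos hvne
      rw [star_id] at this
      linarith
    apply hz
    rw [hzdec, hu, hv0, hw0, elim_zero_zero, elim_zero_zero]
  · have huQ : 0 ≤ u ⬝ᵥ Q *ᵥ u := by
      have := hQ.dotProduct_mulVec_nonneg u
      rwa [star_id] at this
    have hwtA : wt ⬝ᵥ AA *ᵥ wt ≤ u ⬝ᵥ Q *ᵥ u := by linarith
    have hCS : ∀ s : Fin n → ℝ,
        (u ⬝ᵥ Q *ᵥ s) ^ 2 ≤ (u ⬝ᵥ Q *ᵥ u) * (s ⬝ᵥ Q *ᵥ s) := by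
      intro s
      have hpoly : ∀ t : ℝ, 0 ≤ (u ⬝ᵥ Q *ᵥ u) * (t * t) + (2 * (u ⬝ᵥ Q *ᵥ s)) * t
          + s ⬝ᵥ Q *ᵥ s := by
        intro t
        have h0 := hQ.dotProduct_mulVec_nonneg (s + t • u)
        rw [star_id, quad_expand, hsymQ s u] at h0
        ring_nf at h0 ⊢
        linarith [h0]
      have hd := discrim_le_zero hpoly
      rw [discrim] at hd
      nlinarith [hd]
    obtain ⟨Δ, hΔu, hΔb⟩ : ∃ Δ : Matrix (Fin n) (Fin n ⊕ Fin m) ℝ,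
        Δᵀ *ᵥ u = -wt ∧
        ∀ s : Fin n → ℝ, (Δᵀ *ᵥ s) ⬝ᵥ AA *ᵥ (Δᵀ *ᵥ s) ≤ s ⬝ᵥ Q *ᵥ s := by
      rcases eq_or_lt_of_le huQ with hQ0 | hQpos
      · have hwt0 : wt = 0 := by
          by_contra hne
          have := hA.dotProduct_mulVec_pos hne
          rw [star_id] at this
          linarith
        refine ⟨0, by rw [transpose_zero, zero_mulVec, hwt0, neg_zero], fun s => ?_⟩
        rw [transpose_zero, zero_mulVec, zero_dotProduct]
        have := hQ.dotProduct_mulVec_nonneg s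
        rwa [star_id] at this
      · set c : ℝ := (u ⬝ᵥ Q *ᵥ u)⁻¹ with hcdef
        have hcpos : 0 < c := inv_pos.mpr hQpos
        have hc : c * (u ⬝ᵥ Q *ᵥ u) = 1 := inv_mul_cancel₀ hQpos.ne'
        refine ⟨(-c) • vecMulVec (Q *ᵥ u) wt, ?_, ?_⟩
        · rw [transpose_smul, vecMulVec_transpose', smul_mulVec, vecMulVec_mulVec',
            dotProduct_comm, smul_smul]
          have : -c * (u ⬝ᵥ Q *ᵥ u) = -1 := by rw [neg_mul, hc]
          rw [this, neg_one_smul]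
        · intro s
          rw [transpose_smul, vecMulVec_transpose', smul_mulVec, vecMulVec_mulVec',
            smul_smul, quad_smul]
          have hW0 : 0 ≤ wt ⬝ᵥ AA *ᵥ wt := by
            have := hA.posSemidef.dotProduct_mulVec_nonneg wt
            rwa [star_id] at this
          have hXe : (Q *ᵥ u) ⬝ᵥ s = u ⬝ᵥ Q *ᵥ s := by
            rw [dotProduct_comm, hsymQ s u]
          rw [hXe]
          have s1 : (-c * (u ⬝ᵥ Q *ᵥ s)) ^ 2 * (wt ⬝ᵥ AA *ᵥ wt)
              ≤ (-c * (u ⬝ᵥ Q *ᵥ s)) ^ 2 * (u ⬝ᵥ Q *ᵥ u) :=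
            mul_le_mul_of_nonneg_left hwtA (sq_nonneg _)
          refine s1.trans ?_
          have expand : (-c * (u ⬝ᵥ Q *ᵥ s)) ^ 2 * (u ⬝ᵥ Q *ᵥ u)
              = ((u ⬝ᵥ Q *ᵥ s) ^ 2 * c) * (c * (u ⬝ᵥ Q *ᵥ u)) := by ring
          rw [expand, hc, mul_one]
          calc (u ⬝ᵥ Q *ᵥ s) ^ 2 * c
              ≤ ((u ⬝ᵥ Q *ᵥ u) * (s ⬝ᵥ Q *ᵥ s)) * c :=
                mul_le_mul_of_nonneg_right (hCS s) hcpos.le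
            _ = s ⬝ᵥ Q *ᵥ s := by
                have : ((u ⬝ᵥ Q *ᵥ u) * (s ⬝ᵥ Q *ᵥ s)) * c
                    = (s ⬝ᵥ Q *ᵥ s) * (c * (u ⬝ᵥ Q *ᵥ u)) := by ring
                rw [this, hc, mul_one]
    -- construct the member of the ellipsoid
    set Xm : Matrix (Fin n) (Fin n ⊕ Fin m) ℝ := -(BBᵀ * AA⁻¹) + Δ with hXm
    have hXmT : ∀ s : Fin n → ℝ, Xmᵀ *ᵥ s = Δᵀ *ᵥ s - AA⁻¹ *ᵥ (BB *ᵥ s) := by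
      intro s
      rw [hXm, transpose_add, transpose_neg, transpose_mul, hAinvt, transpose_transpose,
        add_mulVec, neg_mulVec, ← mulVec_mulVec, neg_add_eq_sub]
    have hmemX : (memM AA BB CC Xm.toCols₁ Xm.toCols₂).PosSemidef := by
      rw [posSemidef_iff_dotProduct_mulVec]
      constructor
      · exact memM_isHermitian AA BB CC hAt hCt _ _
      · intro s
        rw [star_id, quad_memM, fromCols_toCols, neg_nonneg, hXmT]
        have f1 : AA *ᵥ (AA⁻¹ *ᵥ (BB *ᵥ s)) = BB *ᵥ s := by
          rw [mulVec_mulVec, mul_nonsing_inv _ hAdet, one_mulVec]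
        have f2 : s ⬝ᵥ BBᵀ *ᵥ (Δᵀ *ᵥ s - AA⁻¹ *ᵥ (BB *ᵥ s))
            = (Δᵀ *ᵥ s) ⬝ᵥ (BB *ᵥ s) - (AA⁻¹ *ᵥ (BB *ᵥ s)) ⬝ᵥ (BB *ᵥ s) := by
          rw [dot_mv_transpose BBᵀ s, transpose_transpose, sub_dotProduct]
        have f3 : (Δᵀ *ᵥ s - AA⁻¹ *ᵥ (BB *ᵥ s)) ⬝ᵥ AA *ᵥ (Δᵀ *ᵥ s - AA⁻¹ *ᵥ (BB *ᵥ s))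
            = (Δᵀ *ᵥ s) ⬝ᵥ AA *ᵥ (Δᵀ *ᵥ s) - 2 * ((Δᵀ *ᵥ s) ⬝ᵥ (BB *ᵥ s))
              + (AA⁻¹ *ᵥ (BB *ᵥ s)) ⬝ᵥ (BB *ᵥ s) := by
          rw [mulVec_sub, f1, dotProduct_sub, sub_dotProduct, sub_dotProduct,
            hsymAA (AA⁻¹ *ᵥ (BB *ᵥ s)) (Δᵀ *ᵥ s), f1]
          ring
        have f4 := hQuad s
        have f5 := hΔb s
        have f6 : (BB *ᵥ s) ⬝ᵥ (AA⁻¹ *ᵥ (BB *ᵥ s)) = (AA⁻¹ *ᵥ (BB *ᵥ s)) ⬝ᵥ (BB *ᵥ s) :=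
          dotProduct_comm _ _
        linarith [f2, f3, f4, f5, f6]
    have hcl := hK _ _ hmemX
    have hABK : Xm.toCols₁ + Xm.toCols₂ * K = Xm * Z := by
      have : Xm * Z = Xm.toCols₁ * 1 + Xm.toCols₂ * K := by
        conv_lhs => rw [← fromCols_toCols Xm]
        rw [hZdef, fromCols_mul_fromRows]
      rw [this, Matrix.mul_one]
    rw [hABK] at hcl
    have hu0 := hcl.dotProduct_mulVec_pos hu
    rw [star_id, sub_mulVec, dotProduct_sub, quad_sandwich] at hu0
    have hXu : Xmᵀ *ᵥ u = -w := by
      rw [hXmT, ← hbu, ← hqu, hΔu, hw]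
      funext j
      simp only [Pi.neg_apply, Pi.add_apply, Pi.sub_apply]
      ring
    have hgP : (Xm * Z)ᵀ *ᵥ u = -(Zᵀ *ᵥ w) := by
      rw [transpose_mul, ← mulVec_mulVec, hXu, mulVec_neg]
    rw [hgP, mulVec_neg, dotProduct_neg, neg_dotProduct, neg_neg] at hu0
    have hPsd : 0 ≤ (v - Zᵀ *ᵥ w) ⬝ᵥ P *ᵥ (v - Zᵀ *ᵥ w) := by
      have := hP.posSemidef.dotProduct_mulVec_nonneg (v - Zᵀ *ᵥ w)
      rwa [star_id] at this
    rw [mulVec_sub, dotProduct_sub, sub_dotProduct, sub_dotProduct] at hPsd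
    have hsymP : (Zᵀ *ᵥ w) ⬝ᵥ P *ᵥ v = v ⬝ᵥ P *ᵥ (Zᵀ *ᵥ w) := by
      rw [dot_mv_transpose, hPt]
    linarith [hσ, hu0, hPsd, hsymP]


private lemma nec (hn : 1 ≤ n) (hA : AA.PosDef) (hC : CC.IsSymm)
    (hQ : (BBᵀ * AA⁻¹ * BB - CC).PosSemidef)
    (K : Matrix (Fin m) (Fin n) ℝ) (P : Matrix (Fin n) (Fin n) ℝ) (hP : P.PosDef)
    (hK : ∀ A B, (memM AA BB CC A B).PosSemidef →
      (P - (A + B * K) * P * (A + B * K)ᵀ).PosDef) :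
    ∃ (Y : Matrix (Fin m) (Fin n) ℝ) (P' : Matrix (Fin n) (Fin n) ℝ),
      P'.PosDef ∧ (lmiM AA BB CC P' Y).PosDef := by
  have hPt : Pᵀ = P := (isHermitian_iff_transpose P).mp hP.1
  have hAt : AAᵀ = AA := (isHermitian_iff_transpose AA).mp hA.1
  have hCt : CCᵀ = CC := hC
  set Z : Matrix (Fin n ⊕ Fin m) (Fin n) ℝ := fromRows 1 K with hZdef
  have hslater : ∃ zb : (Fin n ⊕ (Fin n ⊕ (Fin n ⊕ Fin m))) → ℝ,
      zb ⬝ᵥ Smat P Z *ᵥ zb < 0 := by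
    set v0 : Fin n → ℝ := fun _ => 1 with hv0
    have hv0ne : v0 ≠ 0 := by
      intro h
      have := congrFun h ⟨0, hn⟩
      simp [hv0] at this
    refine ⟨Sum.elim 0 (Sum.elim v0 (Sum.elim v0 0)), ?_⟩
    rw [quad_Smat hPt]
    have hZw : Zᵀ *ᵥ (Sum.elim v0 (0 : Fin m → ℝ)) = v0 := by
      rw [hZdef, transpose_fromRows, fromCols_mulVec_sumElim, transpose_one,
        one_mulVec, mulVec_zero, add_zero]
    rw [hZw]
    have hvP : 0 < v0 ⬝ᵥ P *ᵥ v0 := by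
      have := hP.dotProduct_mulVec_pos hv0ne
      rwa [star_id] at this
    simp only [zero_dotProduct, mulVec_zero, dotProduct_zero]
    linarith
  obtain ⟨lam, hlam, hlamq⟩ := slem (Smat P Z) (Rmat AA BB CC) hslater
    (key_lemma AA BB CC hA hC hQ K P hP hK)
  refine ⟨lam • (K * P), lam • P, Matrix.PosDef.of_dotProduct_mulVec_pos ?_ ?_,
    Matrix.PosDef.of_dotProduct_mulVec_pos ?_ ?_⟩
  · rw [isHermitian_iff_transpose, transpose_smul, hPt]
  · intro x hx
    rw [star_id, smul_mulVec, dotProduct_smul, smul_eq_mul]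
    have := hP.dotProduct_mulVec_pos hx
    rw [star_id] at this
    exact mul_pos hlam this
  · exact lmiM_isHermitian AA BB CC hAt hCt (by rw [transpose_smul, hPt]) _
  · intro z hz
    rw [star_id]
    have hzdec : z = Sum.elim (z ∘ Sum.inl)
        (Sum.elim (fun i => z (Sum.inr (Sum.inl i))) (fun j => z (Sum.inr (Sum.inr j)))) := by
      funext i
      rcases i with i | i
      · rfl
      · rcases i with i | i <;> rfl
    set u : Fin n → ℝ := z ∘ Sum.inl with hudef
    set v : Fin n → ℝ := fun i => z (Sum.inr (Sum.inl i)) with hvdef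
    set w : Fin n ⊕ Fin m → ℝ := fun j => z (Sum.inr (Sum.inr j)) with hwdef
    have hq := hlamq z hz
    rw [hzdec, quad_Smat hPt, quad_Rmat] at hq
    rw [hzdec, quad_lmiM]
    have hYP : fromRows (lam • P) (lam • (K * P)) = Z * (lam • P) := by
      rw [hZdef, fromRows_mul, Matrix.one_mul, Matrix.mul_smul]
    have hvterm : v ⬝ᵥ (fromRows (lam • P) (lam • (K * P)))ᵀ *ᵥ w
        = lam * (v ⬝ᵥ P *ᵥ (Zᵀ *ᵥ w)) := by
      rw [hYP, transpose_mul, transpose_smul, hPt, ← mulVec_mulVec,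
        smul_mulVec, dotProduct_smul, smul_eq_mul]
    rw [hvterm]
    simp only [smul_mulVec, dotProduct_smul, smul_eq_mul]
    ring_nf
    ring_nf at hq
    linarith [hq]

end Main

/-- Theorem 1: discrete-time data-driven stabilization via Petersen's lemma. -/
theorem discrete_time_data_driven_stabilization {n m : ℕ} (hn : 1 ≤ n)
    (AA : Matrix (Fin n ⊕ Fin m) (Fin n ⊕ Fin m) ℝ) (hA : AA.PosDef)
    (BB : Matrix (Fin n ⊕ Fin m) (Fin n) ℝ)
    (CC : Matrix (Fin n) (Fin n) ℝ) (hC : CC.IsSymm)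
    (hQ : (BBᵀ * AA⁻¹ * BB - CC).PosSemidef) :
    -- membership in the matrix ellipsoid 𝒞 of data-consistent pairs (A, B)
    let mem : Matrix (Fin n) (Fin n) ℝ → Matrix (Fin n) (Fin m) ℝ → Prop :=
      fun A B =>
        (-(fromCols (1 : Matrix (Fin n) (Fin n) ℝ) (fromCols A B) *
            fromBlocks CC BBᵀ BB AA *
            (fromCols (1 : Matrix (Fin n) (Fin n) ℝ) (fromCols A B))ᵀ)).PosSemidef
    -- the LMI of condition (ii)
    let lmi : Matrix (Fin n) (Fin n) ℝ → Matrix (Fin m) (Fin n) ℝ → Prop :=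
      fun P Y =>
        (-(fromBlocks (-P - CC) (fromCols 0 BBᵀ) (fromRows 0 BB)
            (fromBlocks (-P) (fromRows P Y)ᵀ (fromRows P Y) (-AA)))).PosDef
    ((∃ (K : Matrix (Fin m) (Fin n) ℝ) (P : Matrix (Fin n) (Fin n) ℝ),
        P.PosDef ∧ ∀ A B, mem A B →
          (P - (A + B * K) * P * (A + B * K)ᵀ).PosDef) ↔
      (∃ (Y : Matrix (Fin m) (Fin n) ℝ) (P : Matrix (Fin n) (Fin n) ℝ),
        P.PosDef ∧ lmi P Y)) ∧
    (∀ (Y : Matrix (Fin m) (Fin n) ℝ) (P : Matrix (Fin n) (Fin n) ℝ),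
      P.PosDef → lmi P Y → ∀ A B, mem A B →
        (P - (A + B * (Y * P⁻¹)) * P * (A + B * (Y * P⁻¹))ᵀ).PosDef) := by
  intro mem lmi
  constructor
  · constructor
    · rintro ⟨K, P, hP, hKP⟩
      obtain ⟨Y, P', hP', hl⟩ := nec AA BB CC hn hA hC hQ K P hP (fun A B hm => hKP A B hm)
      exact ⟨Y, P', hP', hl⟩
    · rintro ⟨Y, P, hP, hl⟩
      exact ⟨Y * P⁻¹, P, hP, fun A B hm => suff AA BB CC hA hC Y P hP hl A B hm⟩
  · intro Y P hP hl A B hm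
    exact suff AA BB CC hA hC Y P hP hl A B hm
end

section
/- Let T₀ and T₁ be n×n real symmetric matrices, and assume there exists ζ₀ ∈ ℝⁿ with ζ₀ᵀ T₁ ζ₀ > 0. Then ζᵀ T₀ ζ ≥ 0 for all ζ with ζᵀ T₁ ζ ≥ 0 if and only if there exists τ ≥ 0 such that T₀ − τ T₁ ⪰ 0. -/
open Matrix

private lemma dot_swap {n : ℕ} {T : Matrix (Fin n) (Fin n) ℝ} (hT : T.IsSymm)
    (x y : Fin n → ℝ) : x ⬝ᵥ T.mulVec y = y ⬝ᵥ T.mulVec x := by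
  rw [dotProduct_mulVec]
  nth_rewrite 1 [← hT]
  rw [vecMul_transpose, dotProduct_comm]

private lemma quad_expand_s18 {n : ℕ} {T : Matrix (Fin n) (Fin n) ℝ} (hT : T.IsSymm)
    (x y : Fin n → ℝ) (t : ℝ) :
    (t • x + y) ⬝ᵥ T.mulVec (t • x + y) =
      (x ⬝ᵥ T.mulVec x) * t ^ 2 + 2 * (x ⬝ᵥ T.mulVec y) * t + y ⬝ᵥ T.mulVec y := by
  simp only [mulVec_add, mulVec_smul, dotProduct_add, add_dotProduct, dotProduct_smul,
    smul_dotProduct, smul_eq_mul]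
  rw [dot_swap hT y x]
  ring

private lemma eps_lemma (c₀ c₁ c₂ : ℝ) (h : ∀ ε : ℝ, 0 < ε → 0 ≤ c₀ + c₁ * ε + c₂ * ε ^ 2) :
    0 ≤ c₀ := by
  by_contra hc
  push_neg at hc
  set δ : ℝ := min 1 (-c₀ / (|c₁| + |c₂| + 1)) with hδ
  have hd : 0 < (|c₁| + |c₂| + 1) := by positivity
  have hδ0 : 0 < δ := lt_min one_pos (div_pos (by linarith) hd)
  have hδ1 : δ ≤ 1 := min_le_left _ _
  have hδ2 : δ ≤ -c₀ / (|c₁| + |c₂| + 1) := min_le_right _ _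
  have h1 : c₁ * δ ≤ |c₁| * δ := by nlinarith [le_abs_self c₁]
  have h2 : c₂ * δ ^ 2 ≤ |c₂| * δ := by
    nlinarith [mul_nonneg (sub_nonneg.2 (le_abs_self c₂)) (sq_nonneg δ),
      mul_nonneg (mul_nonneg (abs_nonneg c₂) hδ0.le) (sub_nonneg.2 hδ1)]
  have h3 : (|c₁| + |c₂|) * δ < -c₀ := by
    have h4 : δ * (|c₁| + |c₂| + 1) ≤ -c₀ := (le_div_iff₀ hd).mp hδ2
    nlinarith
  have := h δ hδ0
  nlinarith

private lemma twoD (a b c A B C : ℝ) (ha : a < 0) (hc : 0 < c)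
    (h : ∀ t : ℝ, a * t ^ 2 + 2 * b * t + c = 0 → 0 ≤ A * t ^ 2 + 2 * B * t + C) :
    0 ≤ c * A - a * C := by
  set D : ℝ := Real.sqrt (b ^ 2 - a * c) with hD
  have hD2 : D ^ 2 = b ^ 2 - a * c := Real.sq_sqrt (by nlinarith)
  have hDb : |b| < D := by
    have h0 : b ^ 2 < D ^ 2 := by nlinarith
    have := Real.sqrt_nonneg (b ^ 2 - a * c)
    nlinarith [abs_nonneg b, sq_abs b]
  have hb1 : -b + D > 0 := by cases abs_cases b with
    | inl h' => nlinarith | inr h' => nlinarith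
  have hb2 : -b - D < 0 := by cases abs_cases b with
    | inl h' => nlinarith | inr h' => nlinarith
  set t₁ : ℝ := (-b + D) / a with ht₁
  set t₂ : ℝ := (-b - D) / a with ht₂
  have ha' : a ≠ 0 := ne_of_lt ha
  have ht₁neg : t₁ < 0 := div_neg_of_pos_of_neg hb1 ha
  have ht₂pos : 0 < t₂ := div_pos_of_neg_of_neg hb2 ha
  have r₁ : a * t₁ ^ 2 + 2 * b * t₁ + c = 0 := by
    have e : a * t₁ = -b + D := by rw [ht₁]; field_simp
    have : a * (a * t₁ ^ 2 + 2 * b * t₁ + c) = 0 := by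
      linear_combination (a * t₁ + b + D) * e + hD2
    exact (mul_eq_zero.mp this).resolve_left ha'
  have r₂ : a * t₂ ^ 2 + 2 * b * t₂ + c = 0 := by
    have e : a * t₂ = -b - D := by rw [ht₂]; field_simp
    have : a * (a * t₂ ^ 2 + 2 * b * t₂ + c) = 0 := by
      linear_combination (a * t₂ + b - D) * e + hD2
    exact (mul_eq_zero.mp this).resolve_left ha'
  have h1 := h t₁ r₁
  have h2 := h t₂ r₂
  have e1 : A * (a * t₁ ^ 2 + 2 * b * t₁ + c) = 0 := by rw [r₁]; ring
  have e2 : 0 ≤ (A * t₁ ^ 2 + 2 * B * t₁ + C) * (-a) := mul_nonneg h1 (by linarith)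
  have f1 : A * (a * t₂ ^ 2 + 2 * b * t₂ + c) = 0 := by rw [r₂]; ring
  have f2 : 0 ≤ (A * t₂ ^ 2 + 2 * B * t₂ + C) * (-a) := mul_nonneg h2 (by linarith)
  have k1 : (2 * a * B - 2 * b * A) * t₁ ≤ c * A - a * C := by nlinarith [e1, e2]
  have k2 : (2 * a * B - 2 * b * A) * t₂ ≤ c * A - a * C := by nlinarith [f1, f2]
  rcases le_or_gt 0 (2 * a * B - 2 * b * A) with hP | hP
  · nlinarith [mul_nonneg hP ht₂pos.le]
  · nlinarith [mul_pos_of_neg_of_neg hP ht₁neg]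

/-- Nonstrict S-procedure (S-lemma) with a Slater-type condition. -/
theorem nonstrict_S_procedure {n : ℕ}
    (T₀ T₁ : Matrix (Fin n) (Fin n) ℝ) (hT₀ : T₀.IsSymm) (hT₁ : T₁.IsSymm)
    (hSlater : ∃ ζ₀ : Fin n → ℝ, 0 < ζ₀ ⬝ᵥ T₁.mulVec ζ₀) :
    (∀ ζ : Fin n → ℝ, 0 ≤ ζ ⬝ᵥ T₁.mulVec ζ → 0 ≤ ζ ⬝ᵥ T₀.mulVec ζ) ↔
    (∃ τ : ℝ, 0 ≤ τ ∧ (T₀ - τ • T₁).PosSemidef) := by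
  constructor
  · intro h
    obtain ⟨ζ, hζ⟩ := hSlater
    set S : Set ℝ :=
      {r : ℝ | ∃ x : Fin n → ℝ, 0 < x ⬝ᵥ T₁.mulVec x ∧
        r = (x ⬝ᵥ T₀.mulVec x) / (x ⬝ᵥ T₁.mulVec x)} with hS
    have hne : S.Nonempty := ⟨_, ζ, hζ, rfl⟩
    have hlb : ∀ r ∈ S, (0:ℝ) ≤ r := by
      rintro r ⟨x, hx, rfl⟩
      exact div_nonneg (h x hx.le) hx.le
    have hbdd : BddBelow S := ⟨0, fun r hr => hlb r hr⟩
    set τ : ℝ := sInf S with hτdef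
    have hτ0 : 0 ≤ τ := le_csInf hne hlb
    have key : ∀ x : Fin n → ℝ, 0 ≤ x ⬝ᵥ T₀.mulVec x - τ * (x ⬝ᵥ T₁.mulVec x) := by
      intro x
      rcases lt_trichotomy (x ⬝ᵥ T₁.mulVec x) 0 with hx | hx | hx
      · -- q₁ x < 0
        have hle : (x ⬝ᵥ T₀.mulVec x) / (x ⬝ᵥ T₁.mulVec x) ≤ τ := by
          refine le_csInf hne ?_
          rintro r ⟨y, hy, rfl⟩
          have key2 : 0 ≤ (y ⬝ᵥ T₁.mulVec y) * (x ⬝ᵥ T₀.mulVec x)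
              - (x ⬝ᵥ T₁.mulVec x) * (y ⬝ᵥ T₀.mulVec y) := by
            refine twoD (x ⬝ᵥ T₁.mulVec x) (x ⬝ᵥ T₁.mulVec y) (y ⬝ᵥ T₁.mulVec y)
              (x ⬝ᵥ T₀.mulVec x) (x ⬝ᵥ T₀.mulVec y) (y ⬝ᵥ T₀.mulVec y) hx hy ?_
            intro t ht
            have h1 : (0:ℝ) ≤ (t • x + y) ⬝ᵥ T₁.mulVec (t • x + y) := by
              rw [quad_expand_s18 hT₁ x y t]
              linarith [ht]
            have h2 := h _ h1
            rw [quad_expand_s18 hT₀ x y t] at h2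
            linarith
          rw [div_le_iff_of_neg hx, div_mul_eq_mul_div, div_le_iff₀ hy]
          nlinarith [key2]
        have := (div_le_iff_of_neg hx).mp hle
        linarith
      · -- q₁ x = 0
        obtain ⟨w, hw1, hw2⟩ : ∃ w : Fin n → ℝ, 0 < w ⬝ᵥ T₁.mulVec w ∧
            0 ≤ w ⬝ᵥ T₁.mulVec x := by
          rcases le_or_gt 0 (ζ ⬝ᵥ T₁.mulVec x) with h' | h'
          · exact ⟨ζ, hζ, h'⟩
          · refine ⟨-ζ, ?_, ?_⟩
            · simpa [mulVec_neg] using hζ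
            · simp only [neg_dotProduct]
              linarith
        have h0 : 0 ≤ x ⬝ᵥ T₀.mulVec x := by
          refine eps_lemma _ (2 * (w ⬝ᵥ T₀.mulVec x)) (w ⬝ᵥ T₀.mulVec w) ?_
          intro ε hε
          have h1 : (0:ℝ) ≤ (ε • w + x) ⬝ᵥ T₁.mulVec (ε • w + x) := by
            rw [quad_expand_s18 hT₁ w x ε]
            rw [hx]
            nlinarith
          have h2 := h _ h1
          rw [quad_expand_s18 hT₀ w x ε] at h2
          linarith
        rw [hx]
        linarith
      · -- q₁ x > 0
        have hmem : (x ⬝ᵥ T₀.mulVec x) / (x ⬝ᵥ T₁.mulVec x) ∈ S := ⟨x, hx, rfl⟩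
        have := csInf_le hbdd hmem
        rw [le_div_iff₀ hx] at this
        linarith
    refine ⟨τ, hτ0, PosSemidef.of_dotProduct_mulVec_nonneg ?_ fun x => ?_⟩
    · rw [IsHermitian, conjTranspose_eq_transpose_of_trivial, transpose_sub,
        transpose_smul, hT₀, hT₁]
    · rw [star_trivial]
      have expand : x ⬝ᵥ (T₀ - τ • T₁).mulVec x
          = x ⬝ᵥ T₀.mulVec x - τ * (x ⬝ᵥ T₁.mulVec x) := by
        simp [sub_mulVec, smul_mulVec, dotProduct_sub, dotProduct_smul, smul_eq_mul]
      rw [expand]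
      exact key x
  · rintro ⟨τ, hτ, hherm, hpsd⟩ ζ h1
    have h2 := PosSemidef.dotProduct_mulVec_nonneg (M := T₀ - τ • T₁) ⟨hherm, hpsd⟩ ζ
    rw [star_trivial] at h2
    have expand : ζ ⬝ᵥ (T₀ - τ • T₁).mulVec ζ
        = ζ ⬝ᵥ T₀.mulVec ζ - τ * (ζ ⬝ᵥ T₁.mulVec ζ) := by
      simp [sub_mulVec, smul_mulVec, dotProduct_sub, dotProduct_smul, smul_eq_mul]
    rw [expand] at h2
    nlinarith [mul_nonneg hτ h1]
end
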